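/- There exists N such that for all integers n ≥ N, one has 2·f_{n,0} + ∑_{i=1}^{⌊n/2⌋} f_{n,i} − f_{n,n} < 0, where ⌊·⌋ denotes the integer part. -/

import Mathlib

/-- `f_{n,i}`: the coefficient of `x^i` in `(1 + x + x²)^n`. -/
noncomputable def coeff3 (n i : ℕ) : ℕ :=
  (((1 + Polynomial.X + Polynomial.X ^ 2 : Polynomial ℕ)) ^ n).coeff i

/-!
The central coefficients are supermultiplicative, `f_{a,a} f_{b,b} ≤ f_{a+b,a+b}`, so
`f_{n,n} ≥ f_{12,12}^⌊n/12⌋ = 73789^⌊n/12⌋`, which grows like `2.54^n`. On the other side,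
`(1 + x + x²)^n` is palindromic of degree `2n`, so `f_{n,i} = f_{n,2n-i}`; evaluating at `x = 2`
and keeping only the terms of index `≥ 2n - ⌊n/2⌋` gives `2^(2n - ⌊n/2⌋) ∑_{i ≤ n/2} f_{n,i} ≤ 7^n`,
so the sum is `O((7/2^(3/2))^n) = O(2.48^n)`. The two rates separate from `n = 12 · 67` on.
-/

open Polynomial Finset

namespace Polynomial

theorem coeff_mul_coeff_le_coeff_mul {R : Type*} [CommSemiring R] [PartialOrder R]
    [CanonicallyOrderedAdd R] (p q : R[X]) (a b : ℕ) :
    p.coeff a * q.coeff b ≤ (p * q).coeff (a + b) := by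
  rw [coeff_mul]
  exact single_le_sum_of_canonicallyOrdered (f := fun x => p.coeff x.1 * q.coeff x.2)
    (i := (a, b)) (mem_antidiagonal.mpr rfl)

theorem reflect_one_add_X_add_X_sq {R : Type*} [Semiring R] :
    (1 + X + X ^ 2 : R[X]).reflect 2 = 1 + X + X ^ 2 := by
  ext i
  rw [coeff_reflect]
  rcases le_or_gt i 2 with hi | hi
  · rw [revAt_le hi]
    interval_cases i <;> simp [coeff_X, coeff_one, coeff_X_pow]
  · rw [revAt_eq_self_of_lt hi]

theorem reflect_pow_of_reflect_eq {R : Type*} [CommSemiring R] {p : R[X]} {d : ℕ}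
    (hd : p.natDegree ≤ d) (hp : p.reflect d = p) (n : ℕ) : (p ^ n).reflect (d * n) = p ^ n := by
  induction n with
  | zero => simp
  | succ n ih =>
    rw [pow_succ', mul_add_one, add_comm,
      reflect_mul _ _ hd (mul_comm n d ▸ natDegree_pow_le_of_le n hd), ih, hp]

theorem pow_mul_sum_coeff_le_eval (p : ℕ[X]) {x : ℕ} (hx : 1 ≤ x) {k : ℕ} {s : Finset ℕ}
    (hs : ∀ j ∈ s, k ≤ j) : x ^ k * ∑ j ∈ s, p.coeff j ≤ p.eval x := by
  calc x ^ k * ∑ j ∈ s, p.coeff j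
      ≤ ∑ j ∈ s, p.coeff j * x ^ j := by
        rw [mul_sum]
        exact sum_le_sum fun j hj => by
          rw [mul_comm]; exact Nat.mul_le_mul_left _ (Nat.pow_le_pow_right hx (hs j hj))
    _ = ∑ j ∈ s ∩ p.support, p.coeff j * x ^ j :=
        (sum_subset inter_subset_left fun j _ hj => by simp_all).symm
    _ ≤ ∑ j ∈ p.support, p.coeff j * x ^ j := sum_le_sum_of_subset inter_subset_right
    _ = p.eval x := by rw [eval_eq_sum, sum_def]

end Polynomial

theorem mul_pow_lt_pow_of_le {c a b q₀ q : ℕ} (h₀ : c * a ^ q₀ < b ^ q₀) (hab : a ≤ b)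
    (hb : 0 < b) (hq : q₀ ≤ q) : c * a ^ q < b ^ q := by
  obtain ⟨k, rfl⟩ := Nat.exists_eq_add_of_le hq
  rw [pow_add, pow_add, ← mul_assoc]
  exact Nat.mul_lt_mul_of_lt_of_le h₀ (Nat.pow_le_pow_left hab k) (pow_pos hb k)

theorem coeff3_zero_right (n : ℕ) : coeff3 n 0 = 1 := by
  simp [coeff3, coeff_zero_eq_eval_zero]

theorem coeff3_symm {n i : ℕ} (h : i ≤ 2 * n) : coeff3 n i = coeff3 n (2 * n - i) := by
  have hd : (1 + X + X ^ 2 : ℕ[X]).natDegree ≤ 2 := by compute_degree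
  rw [coeff3, ← reflect_pow_of_reflect_eq hd reflect_one_add_X_add_X_sq n, coeff_reflect,
    revAt_le h, coeff3]

theorem pow_two_mul_sum_coeff3_Icc_le {n m : ℕ} (hm : m ≤ n) :
    2 ^ (2 * n - m) * ∑ i ∈ Icc 1 m, coeff3 n i ≤ 7 ^ n := by
  have hsymm : ∑ i ∈ Icc 1 m, coeff3 n i = ∑ j ∈ (Icc 1 m).image (2 * n - ·), coeff3 n j := by
    rw [sum_image fun a ha b hb hab => by simp only [coe_Icc, Set.mem_Icc] at ha hb hab; omega]
    exact sum_congr rfl fun i hi => coeff3_symm (by simp only [mem_Icc] at hi; omega)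
  have heval : (1 + X + X ^ 2 : ℕ[X]).eval 2 ^ n = 7 ^ n := by norm_num
  rw [hsymm, ← heval, ← eval_pow]
  exact pow_mul_sum_coeff_le_eval _ one_le_two fun j hj => by
    simp only [mem_image, mem_Icc] at hj; omega

theorem coeff3_diag_mul_le (a b : ℕ) : coeff3 a a * coeff3 b b ≤ coeff3 (a + b) (a + b) := by
  rw [coeff3, coeff3, coeff3, pow_add]
  exact coeff_mul_coeff_le_coeff_mul _ _ a b

theorem coeff3_diag_pow_le (m q : ℕ) : coeff3 m m ^ q ≤ coeff3 (m * q) (m * q) := by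
  induction q with
  | zero => simp [coeff3_zero_right]
  | succ q ih =>
    calc coeff3 m m ^ (q + 1) ≤ coeff3 (m * q) (m * q) * coeff3 m m :=
          pow_succ (coeff3 m m) q ▸ Nat.mul_le_mul_right _ ih
      _ ≤ coeff3 (m * (q + 1)) (m * (q + 1)) := mul_add_one m q ▸ coeff3_diag_mul_le _ _

theorem one_le_coeff3_diag (n : ℕ) : 1 ≤ coeff3 n n := by
  have h1 : coeff3 1 1 = 1 := by simp [coeff3, coeff_one, coeff_X]
  simpa [h1] using coeff3_diag_pow_le 1 n

theorem coeff3_diag_mono : Monotone fun n => coeff3 n n := by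
  intro a b hab
  obtain ⟨c, rfl⟩ := Nat.exists_eq_add_of_le hab
  exact (Nat.le_mul_of_pos_right _ (one_le_coeff3_diag c)).trans (coeff3_diag_mul_le a c)

theorem coeff3_twelve_twelve : coeff3 12 12 = 73789 := by
  rw [coeff3]
  ring_nf
  simp [coeff_X_pow, coeff_X, coeff_one]

theorem pow_div_twelve_le_coeff3_diag (n : ℕ) : 73789 ^ (n / 12) ≤ coeff3 n n :=
  coeff3_twelve_twelve ▸ (coeff3_diag_pow_le 12 (n / 12)).trans
    (coeff3_diag_mono (Nat.mul_div_le n 12))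

theorem two_mul_seven_pow_lt {n : ℕ} (hn : 804 ≤ n) :
    2 * 7 ^ n < 2 ^ (2 * n - n / 2) * 73789 ^ (n / 12) := by
  have hblocks : 2 * 7 ^ 11 * (7 ^ 12) ^ (n / 12) < (2 ^ 18 * 73789) ^ (n / 12) :=
    mul_pow_lt_pow_of_le (q₀ := 67) (by norm_num) (by norm_num) (by norm_num) (by omega)
  calc 2 * 7 ^ n = 2 * 7 ^ (n % 12) * (7 ^ 12) ^ (n / 12) := by
        rw [mul_assoc, ← pow_mul, ← pow_add, Nat.mod_add_div]
    _ ≤ 2 * 7 ^ 11 * (7 ^ 12) ^ (n / 12) := by gcongr <;> omega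
    _ < (2 ^ 18) ^ (n / 12) * 73789 ^ (n / 12) := by rwa [← mul_pow]
    _ ≤ 2 ^ (2 * n - n / 2) * 73789 ^ (n / 12) := by
        rw [← pow_mul]; gcongr <;> omega

theorem sum_coeff3_Icc_add_two_lt {n : ℕ} (hn : 804 ≤ n) :
    ∑ i ∈ Icc 1 (n / 2), coeff3 n i + 2 < coeff3 n n := by
  have htwo_le : 2 * 2 ^ (2 * n - n / 2) ≤ 7 ^ n :=
    calc 2 * 2 ^ (2 * n - n / 2) ≤ 2 ^ (2 * n) := by
          rw [← pow_succ']; exact Nat.pow_le_pow_right two_pos (by omega)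
      _ ≤ 7 ^ n := by rw [pow_mul]; exact Nat.pow_le_pow_left (by norm_num) n
  refine Nat.lt_of_mul_lt_mul_left (a := 2 ^ (2 * n - n / 2)) ?_
  calc 2 ^ (2 * n - n / 2) * (∑ i ∈ Icc 1 (n / 2), coeff3 n i + 2)
      ≤ 7 ^ n + 7 ^ n := by
        rw [mul_add, mul_comm _ 2]
        exact add_le_add (pow_two_mul_sum_coeff3_Icc_le (Nat.div_le_self n 2)) htwo_le
    _ < 2 ^ (2 * n - n / 2) * 73789 ^ (n / 12) := by rw [← two_mul]; exact two_mul_seven_pow_lt hn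
    _ ≤ 2 ^ (2 * n - n / 2) * coeff3 n n := by gcongr; exact pow_div_twelve_le_coeff3_diag n

/-- For `n` large, `2 f_{n,0} + ∑_{i=1}^{⌊n/2⌋} f_{n,i} - f_{n,n} < 0`. -/
theorem two_coeff_sum_lt :
    ∃ N : ℕ, ∀ n : ℕ, N ≤ n →
      2 * (coeff3 n 0 : ℤ) + (∑ i ∈ Finset.Icc 1 (n / 2), (coeff3 n i : ℤ)) -
        (coeff3 n n : ℤ) < 0 := by
  refine ⟨804, fun n hn => ?_⟩
  have h := sum_coeff3_Icc_add_two_lt hn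
  zify at h
  rw [coeff3_zero_right]
  push_cast
  linarith
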